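/- If U is a unitary operator on ℂ^d with Bloch components u⁰ = tr[U]/d and uʲ = tr[Υⱼ U]/√(2d), then for every j: u⁰·conj(uʲ) + conj(u⁰)·uʲ + √(d/2)·Σₖₘ (gₖₘⱼ + i·fₖₘⱼ)·uᵏ·conj(uᵐ) = 0. -/
import Mathlib

open Matrix

/-- Any matrix decomposes along the Bloch basis. -/
lemma bloch_decomp (d : ℕ) (hd : 2 ≤ d)
    (Υ : Fin (d ^ 2 - 1) → Matrix (Fin d) (Fin d) ℂ)
    (htrace : ∀ j, (Υ j).trace = 0)
    (horth : ∀ j k, (Υ j * Υ k).trace = if j = k then 2 else 0)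
    (U : Matrix (Fin d) (Fin d) ℂ) :
    U = (U.trace / d) • (1 : Matrix (Fin d) (Fin d) ℂ)
        + ∑ j, ((Υ j * U).trace / 2) • Υ j := by
  have hd0 : (d : ℂ) ≠ 0 := Nat.cast_ne_zero.mpr (by omega)
  set V : Option (Fin (d ^ 2 - 1)) → Matrix (Fin d) (Fin d) ℂ :=
    fun o => o.elim 1 Υ with hV
  have htrV : ∀ (c : Option (Fin (d ^ 2 - 1)) → ℂ),
      (∑ i, c i • V i).trace = c none * d := by
    intro c
    rw [Fintype.sum_option]
    simp [hV, Matrix.trace_smul, Matrix.trace_sum, htrace, smul_eq_mul, Matrix.trace_one]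
  have hmulV : ∀ (c : Option (Fin (d ^ 2 - 1)) → ℂ) k,
      (Υ k * ∑ i, c i • V i).trace = 2 * c (some k) := by
    intro c k
    rw [Fintype.sum_option]
    simp [Matrix.mul_add, Finset.mul_sum, Matrix.mul_smul, Matrix.trace_smul,
      Matrix.trace_add, Matrix.trace_sum, htrace, horth, smul_eq_mul, Matrix.mul_one,
      Finset.sum_ite_eq', mul_comm, hV]
  have hli : LinearIndependent ℂ V := by
    rw [Fintype.linearIndependent_iff]
    intro c hc i
    have h0 : c none = 0 := by
      have := htrV c
      rw [hc] at this
      simpa [hd0, eq_comm, mul_eq_zero] using this.symm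
    match i with
    | none => exact h0
    | some k =>
      have := hmulV c k
      rw [hc] at this
      simpa [eq_comm, mul_eq_zero] using this.symm
  have hcard : Fintype.card (Option (Fin (d ^ 2 - 1)))
      = Module.finrank ℂ (Matrix (Fin d) (Fin d) ℂ) := by
    have h2 : 1 ≤ d ^ 2 := Nat.one_le_pow _ _ (by omega)
    simp only [Fintype.card_option, Fintype.card_fin, Nat.sub_add_cancel h2,
      Module.finrank_matrix, Module.finrank_self, mul_one]
    ring
  let b := basisOfLinearIndependentOfCardEqFinrank hli hcard
  have hb : ⇑b = V := coe_basisOfLinearIndependentOfCardEqFinrank hli hcard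
  set c : Option (Fin (d ^ 2 - 1)) → ℂ := fun i => b.repr U i with hc
  have hrepr : ∑ i, c i • V i = U := by
    conv_rhs => rw [← b.sum_repr U]
    simp [hb, hc]
  have h0 : U.trace = c none * d := by rw [← hrepr]; exact htrV c
  have hk : ∀ k, (Υ k * U).trace = 2 * c (some k) := by
    intro k; rw [← hrepr]; exact hmulV c k
  calc U = ∑ i, c i • V i := hrepr.symm
    _ = c none • 1 + ∑ j, c (some j) • Υ j := by rw [Fintype.sum_option]; rfl
    _ = (U.trace / d) • 1 + ∑ j, ((Υ j * U).trace / 2) • Υ j := by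
        rw [h0]
        congr 1
        · congr 1; field_simp
        · refine Finset.sum_congr rfl fun j _ => ?_
          rw [hk j]; congr 1; ring

/-- unitarity in Bloch coordinates. -/
theorem unitary_bloch_quadratic_relations (d : ℕ) (hd : 2 ≤ d)
    (Υ : Fin (d ^ 2 - 1) → Matrix (Fin d) (Fin d) ℂ)
    (hherm : ∀ j, (Υ j)ᴴ = Υ j)
    (htrace : ∀ j, (Υ j).trace = 0)
    (horth : ∀ j k, (Υ j * Υ k).trace = if j = k then 2 else 0)
    (g f : Fin (d ^ 2 - 1) → Fin (d ^ 2 - 1) → Fin (d ^ 2 - 1) → ℂ)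
    (hg : ∀ k m j, g k m j = (1 / 4) * ((Υ k * Υ m + Υ m * Υ k) * Υ j).trace)
    (hf : ∀ k m j, f k m j = (1 / (4 * Complex.I)) * ((Υ k * Υ m - Υ m * Υ k) * Υ j).trace)
    (U : Matrix (Fin d) (Fin d) ℂ) (hU : Uᴴ * U = 1)
    (u0 : ℂ) (u : Fin (d ^ 2 - 1) → ℂ)
    (hu0 : u0 = U.trace / d)
    (hu : ∀ j, u j = (Υ j * U).trace / (Real.sqrt (2 * d) : ℂ)) :
    ∀ j, u0 * star (u j) + star u0 * u j
        + (Real.sqrt (d / 2) : ℂ)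
            * ∑ k, ∑ m, (g k m j + Complex.I * f k m j) * u k * star (u m) = 0 := by
  intro j
  set s : ℂ := (Real.sqrt (2 * d) : ℂ) with hs
  have hdr : (2:ℝ) ≤ (d:ℝ) := by exact_mod_cast hd
  have h2d : (0:ℝ) < 2 * d := by linarith
  have hsne : s ≠ 0 := by
    rw [hs]
    exact_mod_cast (Real.sqrt_pos.mpr h2d).ne'
  have hss : s * s = 2 * (d:ℂ) := by
    rw [hs, ← Complex.ofReal_mul, Real.mul_self_sqrt h2d.le]
    push_cast; ring
  have hds : (Real.sqrt (d / 2) : ℂ) * s = (d:ℂ) := by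
    rw [hs, ← Complex.ofReal_mul, ← Real.sqrt_mul (by linarith)]
    have : (d:ℝ) / 2 * (2 * d) = d * d := by ring
    rw [this, Real.sqrt_mul_self (by linarith)]
    norm_cast
  have hstars : star s = s := by rw [hs]; exact Complex.conj_ofReal _
  have htr : ∀ k, (Υ k * U).trace = u k * s := by
    intro k; rw [hu k]; field_simp
  have hUeq : U = u0 • (1 : Matrix (Fin d) (Fin d) ℂ) + ∑ k, (u k * s / 2) • Υ k := by
    conv_lhs => rw [bloch_decomp d hd Υ htrace horth U]
    rw [← hu0]
    congr 1
    exact Finset.sum_congr rfl fun k _ => by rw [htr k]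
  have hUH : Uᴴ = (star u0) • (1 : Matrix (Fin d) (Fin d) ℂ)
      + ∑ m, (star (u m) * s / 2) • Υ m := by
    conv_lhs => rw [hUeq]
    rw [Matrix.conjTranspose_add, Matrix.conjTranspose_smul, Matrix.conjTranspose_one]
    congr 1
    rw [Matrix.conjTranspose_sum]
    refine Finset.sum_congr rfl fun m _ => ?_
    rw [Matrix.conjTranspose_smul, hherm]
    congr 1
    simp [hstars]
  have hUU : U * Uᴴ = 1 := mul_eq_one_comm.mp hU
  have hexp : (Υ j * (U * Uᴴ)).trace = 0 := by rw [hUU, Matrix.mul_one, htrace]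
  have hbig : (Υ j * (U * Uᴴ)).trace
      = u0 * star u0 * (Υ j).trace
        + u0 * ∑ m, (star (u m) * s / 2) * (Υ j * Υ m).trace
        + star u0 * ∑ k, (u k * s / 2) * (Υ j * Υ k).trace
        + ∑ k, ∑ m, (u k * s / 2) * (star (u m) * s / 2)
            * (Υ j * (Υ k * Υ m)).trace := by
    conv_lhs => rw [hUH, hUeq]
    simp only [Matrix.mul_add, Matrix.add_mul, Matrix.smul_mul, Matrix.mul_smul,
      Matrix.mul_sum, Matrix.sum_mul, Matrix.mul_one, Matrix.one_mul, smul_smul,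
      Matrix.trace_add, Matrix.trace_sum, Matrix.trace_smul, smul_eq_mul,
      Finset.mul_sum]
    simp only [mul_add, Finset.mul_sum, Finset.sum_add_distrib]
    have h2 : (∑ x : Fin (d^2-1), ∑ i : Fin (d^2-1),
          star (u x) * s / 2 * (u i * s / 2 * (Υ j * (Υ i * Υ x)).trace))
        = ∑ k, ∑ m, u k * s / 2 * (star (u m) * s / 2) * (Υ j * (Υ k * Υ m)).trace := by
      rw [Finset.sum_comm]
      exact Finset.sum_congr rfl fun k _ => Finset.sum_congr rfl fun m _ => by ring
    have h3 : (∑ x : Fin (d^2-1), star (u x) * s / 2 * (u0 * (Υ j * Υ x).trace))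
        = ∑ i, u0 * (star (u i) * s / 2 * (Υ j * Υ i).trace) :=
      Finset.sum_congr rfl fun i _ => by ring
    rw [h2, h3]
    ring
  have hA : ∑ m, (star (u m) * s / 2) * (Υ j * Υ m).trace = star (u j) * s := by
    simp only [horth, mul_ite, mul_zero]
    rw [Finset.sum_ite_eq]
    simp
  have hB : ∑ k, (u k * s / 2) * (Υ j * Υ k).trace = u j * s := by
    simp only [horth, mul_ite, mul_zero]
    rw [Finset.sum_ite_eq]
    simp
  have hgf : ∀ k m, g k m j + Complex.I * f k m j = (Υ j * (Υ k * Υ m)).trace / 2 := by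
    intro k m
    rw [hg, hf, Matrix.add_mul, Matrix.sub_mul, Matrix.trace_add, Matrix.trace_sub,
      show (Υ k * Υ m * Υ j).trace = (Υ j * (Υ k * Υ m)).trace from by
        rw [Matrix.trace_mul_cycle, Matrix.mul_assoc]]
    have hI : Complex.I ≠ 0 := Complex.I_ne_zero
    field_simp
    ring
  have hsum : ∑ k, ∑ m, (g k m j + Complex.I * f k m j) * u k * star (u m)
      = ∑ k, ∑ m, ((Υ j * (Υ k * Υ m)).trace / 2) * u k * star (u m) :=
    Finset.sum_congr rfl fun k _ => Finset.sum_congr rfl fun m _ => by rw [hgf]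
  have hS2 : ∑ k, ∑ m, (u k * s / 2) * (star (u m) * s / 2) * (Υ j * (Υ k * Υ m)).trace
      = (s * s / 2) * ∑ k, ∑ m, ((Υ j * (Υ k * Υ m)).trace / 2) * u k * star (u m) := by
    rw [Finset.mul_sum]
    refine Finset.sum_congr rfl fun k _ => ?_
    rw [Finset.mul_sum]
    exact Finset.sum_congr rfl fun m _ => by ring
  have hE : u0 * (star (u j) * s) + star u0 * (u j * s)
      + (s * s / 2) * ∑ k, ∑ m, ((Υ j * (Υ k * Υ m)).trace / 2) * u k * star (u m) = 0 := by
    have h0 := hbig.symm.trans hexp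
    rw [htrace, hA, hB, hS2] at h0
    linear_combination h0
  rw [hsum]
  set S := ∑ k, ∑ m, ((Υ j * (Υ k * Υ m)).trace / 2) * u k * star (u m) with hS
  have hfin : s * (u0 * star (u j) + star u0 * u j + (Real.sqrt (d / 2) : ℂ) * S) = 0 := by
    linear_combination hE + S * hds - (S / 2) * hss
  exact (mul_eq_zero.mp hfin).resolve_left hsne
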